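/- arXiv:2005.14063 — 3 statements merged into one kernel-verified Lean document; each statement's English description precedes it below -/
import Mathlib

section
/- Let p, μ ∈ ℝ and ν > 0, and let X be a real random variable with Gaussian law N(μ, ν²). Then E[e^{pX} Φ(X)] = e^{pμ + p²ν²/2} · Φ((μ + pν²)/√(1 + ν²)). -/
/-!
Exponential tilting absorbs the factor e^{pX}: e^{px} times the N(μ, ν²) density is
e^{pμ + p²ν²/2} times the N(μ + pν², ν²) density. For Y ~ N(m, ν²), E[Φ(Y)] = P(Z - Y ≤ 0) with
Z ~ N(0, 1) independent of Y, since Φ is the distribution function of N(0, 1); as a convolution of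
Gaussians, Z - Y ~ N(-m, 1 + ν²), so this probability is Φ(m / √(1 + ν²)).
-/

open MeasureTheory ProbabilityTheory Real

open scoped NNReal ENNReal

open Set

/-- The standard normal cumulative distribution function
`Φ(x) = ∫_{−∞}^x e^{−t²/2}/√(2π) dt`. -/
noncomputable def stdNormalCDF (x : ℝ) : ℝ :=
  ∫ t in Set.Iic x, Real.exp (-t ^ 2 / 2) / Real.sqrt (2 * Real.pi)

lemma stdNormalCDF_eq_cdf : stdNormalCDF = cdf (gaussianReal 0 1) := by
  funext x
  rw [cdf_eq_real, measureReal_def, gaussianReal_apply_eq_integral 0 one_ne_zero,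
    ENNReal.toReal_ofReal (setIntegral_nonneg measurableSet_Iic fun t _ ↦ gaussianPDFReal_nonneg ..)]
  simp [stdNormalCDF, gaussianPDFReal, div_eq_inv_mul]

section Convolution

variable (ρ η : Measure ℝ)

lemma lintegral_measure_Iic_eq_conv [SFinite ρ] :
    ∫⁻ x, ρ (Iic x) ∂η = (η.map (-·) ∗ ρ) (Iic 0) := by
  have hanti : Antitone fun x ↦ ρ (Iic (-x)) := fun a b hab ↦
    measure_mono (Iic_subset_Iic.2 (neg_le_neg hab))
  have hshift (x : ℝ) :
      (Iic (0 : ℝ)).indicator 1 ∘ (x + ·) = (Iic (-x)).indicator (1 : ℝ → ℝ≥0∞) := by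
    ext y
    simp [indicator_apply, le_neg_iff_add_nonpos_left]
  calc ∫⁻ x, ρ (Iic x) ∂η = ∫⁻ x, ρ (Iic (-x)) ∂(η.map (-·)) := by
        rw [lintegral_map hanti.measurable measurable_neg]
        simp
    _ = (η.map (-·) ∗ ρ) (Iic 0) := by
        rw [← lintegral_indicator_one measurableSet_Iic,
          Measure.lintegral_conv (measurable_one.indicator measurableSet_Iic)]
        congr with x
        rw [← lintegral_indicator_one measurableSet_Iic, ← hshift]
        rfl

lemma integral_cdf_eq_conv [IsProbabilityMeasure ρ] :
    ∫ x, cdf ρ x ∂η = (η.map (-·) ∗ ρ).real (Iic 0) := by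
  rw [integral_eq_lintegral_of_nonneg_ae (ae_of_all _ (cdf_nonneg ρ))
    (cdf ρ).mono.measurable.aestronglyMeasurable]
  simp_rw [ofReal_cdf, lintegral_measure_Iic_eq_conv, measureReal_def]

end Convolution

section Gaussian

variable (m : ℝ) {v : ℝ≥0}

lemma cdf_gaussianReal (hv : v ≠ 0) (a : ℝ) :
    cdf (gaussianReal m v) a = cdf (gaussianReal 0 1) ((a - m) / √v) := by
  have hstd : ((gaussianReal m v).map (· - m)).map (· / √v) = gaussianReal 0 1 := by
    rw [gaussianReal_map_sub_const, gaussianReal_map_div_const]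
    congr 1
    · simp
    · ext
      simp [hv]
  have hsqrt : 0 < √(v : ℝ) := by positivity
  rw [cdf_eq_real, cdf_eq_real, ← hstd, Measure.map_map (by fun_prop) (by fun_prop),
    map_measureReal_apply (by fun_prop) measurableSet_Iic]
  congr 1
  ext x
  simp [div_le_div_iff_of_pos_right hsqrt]

lemma integral_cdf_gaussianReal :
    ∫ x, cdf (gaussianReal 0 1) x ∂(gaussianReal m v) = cdf (gaussianReal 0 1) (m / √(1 + v)) := by
  rw [integral_cdf_eq_conv, gaussianReal_map_neg, gaussianReal_conv_gaussianReal, ← cdf_eq_real,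
    cdf_gaussianReal _ (by positivity)]
  simp [add_comm]

lemma exp_mul_mul_gaussianPDFReal (p x : ℝ) (hv : v ≠ 0) :
    exp (p * x) * gaussianPDFReal m v x
      = exp (m * p + v * p ^ 2 / 2) * gaussianPDFReal (m + p * v) v x := by
  have hv' : (v : ℝ) ≠ 0 := by exact_mod_cast hv
  have hexp : p * x + -(x - m) ^ 2 / (2 * v)
      = (m * p + v * p ^ 2 / 2) + -(x - (m + p * v)) ^ 2 / (2 * v) := by
    field_simp
    ring
  simp only [gaussianPDFReal]
  calc exp (p * x) * ((√(2 * π * v))⁻¹ * exp (-(x - m) ^ 2 / (2 * v)))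
      = (√(2 * π * v))⁻¹ * exp (p * x + -(x - m) ^ 2 / (2 * v)) := by rw [exp_add]; ring
    _ = _ := by rw [hexp, exp_add]; ring

lemma gaussianReal_tilted_mul (p : ℝ) (hv : v ≠ 0) :
    (gaussianReal m v).tilted (p * ·) = gaussianReal (m + p * v) v := by
  have hmgf : ∫ x, exp (p * x) ∂(gaussianReal m v) = exp (m * p + v * p ^ 2 / 2) :=
    congrFun mgf_fun_id_gaussianReal p
  rw [Measure.tilted, hmgf, gaussianReal_of_var_ne_zero _ hv, gaussianReal_of_var_ne_zero _ hv,
    ← withDensity_mul _ (measurable_gaussianPDF _ _) (by fun_prop)]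
  congr with x
  rw [Pi.mul_apply, gaussianPDF, gaussianPDF, ← ENNReal.ofReal_mul (gaussianPDFReal_nonneg ..),
    mul_div_assoc', mul_comm, exp_mul_mul_gaussianPDFReal m p x hv,
    mul_div_cancel_left₀ _ (exp_pos _).ne']

lemma integral_exp_mul_mul_gaussianReal (p : ℝ) (hv : v ≠ 0) (g : ℝ → ℝ) :
    ∫ x, exp (p * x) * g x ∂(gaussianReal m v)
      = exp (m * p + v * p ^ 2 / 2) * ∫ x, g x ∂(gaussianReal (m + p * v) v) := by
  rw [← gaussianReal_tilted_mul m p hv, integral_tilted_mul_eq_mgf, mgf_fun_id_gaussianReal,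
    ← integral_const_mul]
  congr with x
  rw [smul_eq_mul, ← mul_assoc, mul_div_cancel₀ _ (exp_pos _).ne']

end Gaussian

theorem stmt_0_general {Ω : Type*} [MeasurableSpace Ω] (P : Measure Ω)
    (p μ ν : ℝ) (hν : 0 < ν) (X : Ω → ℝ) (hX : Measurable X)
    (hlaw : P.map X = gaussianReal μ ⟨ν ^ 2, sq_nonneg ν⟩) :
    ∫ ω, Real.exp (p * X ω) * stdNormalCDF (X ω) ∂P =
      Real.exp (p * μ + p ^ 2 * ν ^ 2 / 2) *
        stdNormalCDF ((μ + p * ν ^ 2) / Real.sqrt (1 + ν ^ 2)) := by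
  set v : ℝ≥0 := ⟨ν ^ 2, sq_nonneg ν⟩
  have hvν : (v : ℝ) = ν ^ 2 := rfl
  have hv : v ≠ 0 := fun h ↦ (pow_pos hν 2).ne' (congrArg NNReal.toReal h)
  have hcdf : Measurable (cdf (gaussianReal 0 1)) := (cdf _).mono.measurable
  rw [stdNormalCDF_eq_cdf]
  calc ∫ ω, exp (p * X ω) * cdf (gaussianReal 0 1) (X ω) ∂P
      = ∫ x, exp (p * x) * cdf (gaussianReal 0 1) x ∂(P.map X) := by
        rw [integral_map hX.aemeasurable (by fun_prop)]
    _ = _ := by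
        rw [hlaw, integral_exp_mul_mul_gaussianReal _ _ hv, integral_cdf_gaussianReal, hvν]
        ring_nf

/-- **Lemma 1 (p ≠ 0 case included).** If `X ~ N(μ, ν²)` then
`E[e^{pX} Φ(X)] = e^{pμ + p²ν²/2} Φ((μ + pν²)/√(1 + ν²))`. -/
theorem stmt_0 {Ω : Type*} [MeasurableSpace Ω] (P : Measure Ω) [IsProbabilityMeasure P]
    (p μ ν : ℝ) (hν : 0 < ν) (X : Ω → ℝ) (hX : Measurable X)
    (hlaw : P.map X = gaussianReal μ ⟨ν ^ 2, sq_nonneg ν⟩) :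
    ∫ ω, Real.exp (p * X ω) * stdNormalCDF (X ω) ∂P =
      Real.exp (p * μ + p ^ 2 * ν ^ 2 / 2) *
        stdNormalCDF ((μ + p * ν ^ 2) / Real.sqrt (1 + ν ^ 2)) :=
  stmt_0_general P p μ ν hν X hX hlaw
end

section
/- Let μ ∈ ℝ and ν > 0, and let X be a real random variable with Gaussian law N(μ, ν²). Then E[Φ(X)] = Φ(μ/√(1 + ν²)). -/
/-!
Write `Φ(x) = P(Z ≤ x)` with `Z ~ N(0, 1)` independent of `X`. Then `E[Φ(X)] = P(Z - X ≤ 0)`,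
and the law of `Z - X` is the convolution `N(0, 1) ∗ N(-μ, ν²) = N(-μ, 1 + ν²)`, whose mass on
`(-∞, 0]` is `Φ(μ / √(1 + ν²))` after standardisation.
-/

open MeasureTheory ProbabilityTheory Real

open Set
open scoped NNReal ENNReal

lemma stdNormalCDF_eq_measureReal (x : ℝ) : stdNormalCDF x = (gaussianReal 0 1).real (Iic x) := by
  rw [measureReal_def, gaussianReal_apply_eq_integral 0 one_ne_zero,
    ENNReal.toReal_ofReal
      (setIntegral_nonneg measurableSet_Iic fun t _ ↦ gaussianPDFReal_nonneg _ _ t)]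
  refine setIntegral_congr_fun measurableSet_Iic fun t _ ↦ ?_
  simp [gaussianPDFReal, div_eq_inv_mul, mul_comm]

lemma measurable_measure_Iic (μ : Measure ℝ) : Measurable fun x ↦ μ (Iic x) :=
  Monotone.measurable fun _ _ hxy ↦ measure_mono (Iic_subset_Iic.2 hxy)

lemma lintegral_measure_Iic_eq_conv_s1 (μ ν : Measure ℝ) [SFinite μ] [SFinite ν] :
    ∫⁻ x, μ (Iic x) ∂ν = (μ ∗ ν.map (-·)) (Iic 0) := by
  rw [Measure.conv, ← Measure.map_id (μ := μ),
    Measure.map_prod_map _ _ measurable_id measurable_neg,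
    Measure.map_map (by fun_prop) (by fun_prop), Measure.map_apply (by fun_prop) measurableSet_Iic,
    Measure.map_id, Measure.prod_apply_symm]
  · congr 1 with y
    congr 1 with x
    simp [← sub_eq_add_neg]
  · exact measurableSet_Iic.preimage (by fun_prop)

lemma integral_measureReal_Iic_eq_conv (μ ν : Measure ℝ) [IsFiniteMeasure μ] [SFinite ν] :
    ∫ x, μ.real (Iic x) ∂ν = (μ ∗ ν.map (-·)).real (Iic 0) := by
  simp_rw [measureReal_def]
  rw [integral_toReal (measurable_measure_Iic μ).aemeasurable
    (ae_of_all _ fun _ ↦ measure_lt_top _ _), lintegral_measure_Iic_eq_conv_s1]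

lemma gaussianReal_real_Iic (m : ℝ) {v : ℝ≥0} (hv : v ≠ 0) (x : ℝ) :
    (gaussianReal m v).real (Iic x) = (gaussianReal 0 1).real (Iic ((x - m) / √v)) := by
  have hσ : 0 < √(v : ℝ) := by positivity
  have hstd : (gaussianReal m v).map (fun y ↦ (y - m) / √v) = gaussianReal 0 1 := by
    rw [show (fun y ↦ (y - m) / √v) = (· / √v) ∘ (· - m) from rfl,
      ← Measure.map_map (by fun_prop) (by fun_prop), gaussianReal_map_sub_const,
      gaussianReal_map_div_const, sub_self, zero_div]
    congr
    ext
    simp [hv]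
  rw [← hstd, map_measureReal_apply (by fun_prop) measurableSet_Iic]
  congr 1
  ext y
  simp [div_le_div_iff_of_pos_right hσ]

lemma measurable_stdNormalCDF : Measurable stdNormalCDF := by
  rw [funext stdNormalCDF_eq_measureReal]
  exact (measurable_measure_Iic _).ennreal_toReal

lemma integral_stdNormalCDF_gaussianReal (m : ℝ) (v : ℝ≥0) :
    ∫ x, stdNormalCDF x ∂gaussianReal m v = stdNormalCDF (m / √(1 + v)) := by
  simp_rw [stdNormalCDF_eq_measureReal]
  rw [integral_measureReal_Iic_eq_conv, gaussianReal_map_neg, gaussianReal_conv_gaussianReal,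
    gaussianReal_real_Iic _ (by simp), zero_add, zero_sub, neg_neg, NNReal.coe_add, NNReal.coe_one]

theorem stmt_1_general {Ω : Type*} [MeasurableSpace Ω] (P : Measure Ω)
    (μ ν : ℝ) (X : Ω → ℝ) (hX : Measurable X)
    (hlaw : P.map X = gaussianReal μ ⟨ν ^ 2, sq_nonneg ν⟩) :
    ∫ ω, stdNormalCDF (X ω) ∂P = stdNormalCDF (μ / Real.sqrt (1 + ν ^ 2)) := by
  rw [← integral_map hX.aemeasurable measurable_stdNormalCDF.aestronglyMeasurable, hlaw]
  exact integral_stdNormalCDF_gaussianReal μ ⟨ν ^ 2, sq_nonneg ν⟩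

/-- If `X ~ N(μ, ν²)` then `E[Φ(X)] = Φ(μ/√(1 + ν²))`. -/
theorem stmt_1 {Ω : Type*} [MeasurableSpace Ω] (P : Measure Ω) [IsProbabilityMeasure P]
    (μ ν : ℝ) (hν : 0 < ν) (X : Ω → ℝ) (hX : Measurable X)
    (hlaw : P.map X = gaussianReal μ ⟨ν ^ 2, sq_nonneg ν⟩) :
    ∫ ω, stdNormalCDF (X ω) ∂P = stdNormalCDF (μ / Real.sqrt (1 + ν ^ 2)) :=
  stmt_1_general P μ ν X hX hlaw
end

section
/- Let (Ω, F, P) be a probability space, G ⊆ F a sub-σ-algebra, M a G-measurable real random variable, W a real random variable independent of G with standard Gaussian law N(0,1), and Σ > 0. Then for P-almost every ω, the conditional distribution of the random variable M + ΣW given G, evaluated at ω, equals the Gaussian measure N(M(ω), Σ²). -/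
open MeasureTheory ProbabilityTheory
open scoped ENNReal

/-!
The conditional law of `(M, W)` given `G` is `δ_M ⊗ N(0,1)`: for `G`-measurable `s`, the pair
`(1_s, M)` is independent of `W`, so the joint law factorizes and
`P(s ∩ {(M, W) ∈ B}) = ∫_s N(0,1){w | (M ω, w) ∈ B} dP`. Pushing forward by
`(m, w) ↦ m + S w` turns the slice measure into `N(M ω, S²)`, and agreement a.e. on the countably
many sets `Iic q`, `q ∈ ℚ`, upgrades to a.e. agreement of the measures.
-/

theorem gaussianReal_zero_one_map_const_add_const_mul (m c : ℝ) :
    (gaussianReal 0 1).map (fun w => m + c * w) = gaussianReal m ⟨c ^ 2, sq_nonneg c⟩ := by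
  rw [show (fun w => m + c * w) = (m + ·) ∘ (c * ·) from rfl,
    ← Measure.map_map (by fun_prop) (by fun_prop), gaussianReal_map_const_mul,
    gaussianReal_map_const_add]
  congr 1
  · ring
  · exact mul_one _

theorem ae_eq_of_forall_ae_eq_apply {α : Type*} {mα : MeasurableSpace α} {P : Measure α}
    {κ η : α → Measure ℝ} [∀ a, IsFiniteMeasure (κ a)]
    (h : ∀ A, MeasurableSet A → ∀ᵐ a ∂P, κ a A = η a A) : ∀ᵐ a ∂P, κ a = η a := by
  filter_upwards [h _ MeasurableSet.univ,
    ae_all_iff.2 fun q : ℚ => h (Set.Iic (q : ℝ)) measurableSet_Iic] with a h_univ h_Iic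
  refine ext_of_generate_finite _ Real.borel_eq_generateFrom_Iic_rat Real.isPiSystem_Iic_rat
    ?_ h_univ
  simpa using h_Iic

namespace ProbabilityTheory

variable {Ω β γ : Type*} {G mΩ : MeasurableSpace Ω} {mβ : MeasurableSpace β}
  {mγ : MeasurableSpace γ} {P : Measure Ω} [IsFiniteMeasure P]

theorem IndepFun.lintegral_comp_prodMk {V : Ω → β} {W : Ω → γ} (hV : Measurable V)
    (hW : Measurable W) (hVW : IndepFun V W P) {f : β × γ → ℝ≥0∞} (hf : Measurable f) :
    ∫⁻ ω, f (V ω, W ω) ∂P = ∫⁻ ω, ∫⁻ w, f (V ω, w) ∂(P.map W) ∂P := by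
  rw [← lintegral_map (f := f) hf (hV.prodMk hW),
    (indepFun_iff_map_prod_eq_prod_map_map hV.aemeasurable hW.aemeasurable).mp hVW,
    lintegral_prod _ hf.aemeasurable, lintegral_map hf.lintegral_prod_right' hV]

theorem Indep.setLIntegral_comp_prodMk (hG : G ≤ mΩ) {Y : Ω → β} {W : Ω → γ}
    (hY : Measurable[G] Y) (hW : Measurable W) (hWG : Indep (mγ.comap W) G P)
    {f : β × γ → ℝ≥0∞} (hf : Measurable f) {s : Set Ω} (hs : MeasurableSet[G] s) :
    ∫⁻ ω in s, f (Y ω, W ω) ∂P = ∫⁻ ω in s, ∫⁻ w, f (Y ω, w) ∂(P.map W) ∂P := by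
  set V : Ω → ℝ≥0∞ × β := fun ω => (s.indicator (fun _ => 1) ω, Y ω)
  have hV : Measurable[G] V := (measurable_const.indicator hs).prodMk hY
  have hVW : IndepFun V W P := by
    rw [IndepFun_iff_Indep]
    exact indep_of_indep_of_le_left hWG.symm hV.comap_le
  have h_pair := hVW.lintegral_comp_prodMk (hV.mono hG le_rfl) hW
    (f := fun p => p.1.1 * f (p.1.2, p.2)) (by fun_prop)
  have h_indicator (g : Ω → ℝ≥0∞) :
      ∫⁻ ω, s.indicator (fun _ => 1) ω * g ω ∂P = ∫⁻ ω in s, g ω ∂P := by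
    rw [← lintegral_indicator (hG _ hs)]
    congr 1 with ω
    by_cases hω : ω ∈ s <;> simp [hω]
  have h_const (c : ℝ≥0∞) (y : β) :
      ∫⁻ w, c * f (y, w) ∂(P.map W) = c * ∫⁻ w, f (y, w) ∂(P.map W) :=
    lintegral_const_mul c (hf.comp measurable_prodMk_left)
  simpa only [V, h_const, h_indicator] using h_pair

theorem Indep.condExp_indicator_comp_prodMk_ae_eq (hG : G ≤ mΩ) {Y : Ω → β} {W : Ω → γ}
    (hY : Measurable[G] Y) (hW : Measurable W) (hWG : Indep (mγ.comap W) G P)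
    {B : Set (β × γ)} (hB : MeasurableSet B) :
    (fun ω => (P.map W (Prod.mk (Y ω) ⁻¹' B)).toReal) =ᵐ[P]
      P[fun ω => B.indicator (fun _ => (1 : ℝ)) (Y ω, W ω) | G] := by
  have hYW : Measurable fun ω => (Y ω, W ω) := (hY.mono hG le_rfl).prodMk hW
  have h_slice : Measurable fun y => P.map W (Prod.mk y ⁻¹' B) :=
    measurable_measure_prodMk_left hB
  refine ae_eq_condExp_of_forall_setIntegral_eq hG ?_ (fun s _ _ => ?_) (fun s hs _ => ?_)
    (h_slice.comp hY).ennreal_toReal.aestronglyMeasurable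
  · exact (integrable_const (1 : ℝ)).indicator (hYW hB)
  · refine Integrable.integrableOn (.of_bound (C := P.map W Set.univ |>.toReal)
      ((h_slice.comp (hY.mono hG le_rfl)).ennreal_toReal.aestronglyMeasurable) ?_)
    refine .of_forall fun ω => ?_
    rw [Real.norm_of_nonneg ENNReal.toReal_nonneg]
    exact ENNReal.toReal_mono (measure_ne_top _ _) (measure_mono (Set.subset_univ _))
  · have h_fiber (y : β) :
        ∫⁻ w, B.indicator 1 (y, w) ∂(P.map W) = P.map W (Prod.mk y ⁻¹' B) :=
      lintegral_indicator_one (measurable_prodMk_left hB)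
    have h_joint : ∫⁻ ω in s, B.indicator 1 (Y ω, W ω) ∂P =
        P.restrict s ((fun ω => (Y ω, W ω)) ⁻¹' B) :=
      lintegral_indicator_one (hYW hB)
    have h_lintegral := hWG.setLIntegral_comp_prodMk hG hY hW
      (measurable_one.indicator hB) hs
    simp only [h_joint, h_fiber] at h_lintegral
    rw [integral_toReal (f := fun ω => P.map W (Prod.mk (Y ω) ⁻¹' B))
      (h_slice.comp (hY.mono hG le_rfl)).aemeasurable (.of_forall fun _ => measure_lt_top _ _),
      ← h_lintegral]
    exact (integral_indicator_one (hYW hB)).symm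

end ProbabilityTheory

theorem stmt_5_general {Ω : Type*} {F : MeasurableSpace Ω} (P : Measure Ω) [IsProbabilityMeasure P]
    (G : MeasurableSpace Ω) (hG : G ≤ F)
    (M : Ω → ℝ) (hM : Measurable[G] M)
    (W : Ω → ℝ) (hW : Measurable[F] W)
    (hindep : Indep (MeasurableSpace.comap W inferInstance) G P)
    (hlaw : @Measure.map Ω ℝ F _ W P = gaussianReal 0 1)
    (S : ℝ)
    (κ : Ω → Measure ℝ) (hκ_prob : ∀ ω, IsProbabilityMeasure (κ ω))
    (hκ_version : ∀ A : Set ℝ, MeasurableSet A →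
      (fun ω => (κ ω A).toReal) =ᵐ[P]
        P[fun ω => A.indicator (fun _ => (1 : ℝ)) (M ω + S * W ω) | G]) :
    ∀ᵐ ω ∂P, κ ω = gaussianReal (M ω) ⟨S ^ 2, sq_nonneg S⟩ := by
  refine ae_eq_of_forall_ae_eq_apply fun A hA => ?_
  have hB : MeasurableSet ((fun p : ℝ × ℝ => p.1 + S * p.2) ⁻¹' A) :=
    (by fun_prop : Measurable fun p : ℝ × ℝ => p.1 + S * p.2) hA
  have h_slice (m : ℝ) :
      gaussianReal 0 1 (Prod.mk m ⁻¹' ((fun p : ℝ × ℝ => p.1 + S * p.2) ⁻¹' A)) =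
        gaussianReal m ⟨S ^ 2, sq_nonneg S⟩ A := by
    rw [← gaussianReal_zero_one_map_const_add_const_mul, Measure.map_apply (by fun_prop) hA]
    rfl
  filter_upwards [(hκ_version A hA).trans
    (hindep.condExp_indicator_comp_prodMk_ae_eq hG hM hW hB).symm] with ω hω
  rw [hlaw, h_slice] at hω
  -- instance search does not see through the anonymous constructor `⟨S ^ 2, _⟩`
  have := instIsProbabilityMeasureGaussianReal (M ω) ⟨S ^ 2, sq_nonneg S⟩
  exact (ENNReal.toReal_eq_toReal_iff' (measure_ne_top _ _) (measure_ne_top _ _)).mp hω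

/-- **Conditional law of `M + SW` given `G`.** Let `M` be `G`-measurable, `W` independent
of `G` with standard Gaussian law `N(0,1)` and `S > 0` (playing the role of Σ). If
`κ : Ω → Measure ℝ` is a `G`-measurable (probability) kernel such that for every Borel set
`A`, `ω ↦ κ(ω)(A)` is a version of `E[1_{M + SW ∈ A} | G]` (i.e. `κ` is the conditional
distribution of `M + SW` given `G`), then for `P`-almost every `ω`,
`κ(ω) = N(M(ω), S²)`. -/
theorem stmt_5 {Ω : Type*} {F : MeasurableSpace Ω} (P : Measure Ω) [IsProbabilityMeasure P]
    (G : MeasurableSpace Ω) (hG : G ≤ F)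
    (M : Ω → ℝ) (hM : Measurable[G] M)
    (W : Ω → ℝ) (hW : Measurable[F] W)
    (hindep : Indep (MeasurableSpace.comap W inferInstance) G P)
    (hlaw : @Measure.map Ω ℝ F _ W P = gaussianReal 0 1)
    (S : ℝ) (hS : 0 < S)
    (κ : Ω → Measure ℝ) (hκ_prob : ∀ ω, IsProbabilityMeasure (κ ω))
    (hκ_meas : ∀ A : Set ℝ, MeasurableSet A → Measurable[G] fun ω => κ ω A)
    (hκ_version : ∀ A : Set ℝ, MeasurableSet A →
      (fun ω => (κ ω A).toReal) =ᵐ[P]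
        P[fun ω => A.indicator (fun _ => (1 : ℝ)) (M ω + S * W ω) | G]) :
    ∀ᵐ ω ∂P, κ ω = gaussianReal (M ω) ⟨S ^ 2, sq_nonneg S⟩ :=
  stmt_5_general P G hG M hM W hW hindep hlaw S κ hκ_prob hκ_version
end
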